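/- arXiv:1909.04466 — 3 statements merged into one kernel-verified Lean document; each statement's English description precedes it below -/
import Mathlib

section
/- A linear map T from n×n complex matrices to m×m complex matrices is completely positive if and only if its Choi matrix, with entries T_{(j,l),(i,k)} = ⟨e_l^B, T(|e_i^A⟩⟨e_j^A|) e_k^B⟩ regarded as an operator on ℂ^n ⊗ ℂ^m, is positive semidefinite. -/
open scoped ComplexOrder

/-- The lift `T ⊗ id_N` of a linear map `T` on matrices, acting on block matrices
indexed by `Fin n × Fin N`. -/
noncomputable def liftMap (n m N : ℕ)
    (T : Matrix (Fin n) (Fin n) ℂ →ₗ[ℂ] Matrix (Fin m) (Fin m) ℂ)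
    (M : Matrix (Fin n × Fin N) (Fin n × Fin N) ℂ) :
    Matrix (Fin m × Fin N) (Fin m × Fin N) ℂ :=
  Matrix.of fun p q => T (Matrix.of fun a b => M (a, p.2) (b, q.2)) p.1 q.1

/-- `T` is completely positive: `T ⊗ id_N` preserves positive semidefiniteness
for every `N`. -/
def IsCompletelyPositive (n m : ℕ)
    (T : Matrix (Fin n) (Fin n) ℂ →ₗ[ℂ] Matrix (Fin m) (Fin m) ℂ) : Prop :=
  ∀ (N : ℕ) (M : Matrix (Fin n × Fin N) (Fin n × Fin N) ℂ),
    M.PosSemidef → (liftMap n m N T M).PosSemidef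

/-- The Choi matrix of `T`, the operator on `ℂ^n ⊗ ℂ^m` with entries
`C_{(i,k),(j,l)} = T(|e_i⟩⟨e_j|)_{k l}`. -/
noncomputable def choiMatrix (n m : ℕ)
    (T : Matrix (Fin n) (Fin n) ℂ →ₗ[ℂ] Matrix (Fin m) (Fin m) ℂ) :
    Matrix (Fin n × Fin m) (Fin n × Fin m) ℂ :=
  Matrix.of fun p q => T (Matrix.single p.1 q.1 1) p.2 q.2

/-! For a rank-one `M = v v*` the lift `(T ⊗ id_N) M` is the congruence `Kᴴ C K` of the Choi
matrix `C` by `K = v̄ ⊗ 1`, where `v ∈ ℂ^n ⊗ ℂ^N` is read as an `n × N` matrix; since every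
positive semidefinite `M` is a sum of such rank-one matrices, a positive semidefinite `C` makes
every lift positive. Conversely, `C` is, up to swapping the tensor factors, the lift
`(T ⊗ id_n)(Ω Ω*)` of the projection onto the unnormalised maximally entangled vector
`Ω = ∑ᵢ eᵢ ⊗ eᵢ`. -/

open Matrix

theorem LinearMap.matrix_apply_eq_sum_single {R ι ι' κ κ' : Type*} [CommSemiring R]
    [Fintype ι] [Fintype ι'] [DecidableEq ι] [DecidableEq ι']
    (f : Matrix ι ι' R →ₗ[R] Matrix κ κ' R) (B : Matrix ι ι' R) (k : κ) (l : κ') :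
    f B k l = ∑ i, ∑ j, B i j * f (Matrix.single i j 1) k l := by
  conv_lhs => rw [matrix_eq_sum_single B]
  simp only [map_sum, Matrix.sum_apply]
  refine Finset.sum_congr rfl fun i _ => Finset.sum_congr rfl fun j _ => ?_
  rw [show Matrix.single i j (B i j) = B i j • Matrix.single i j 1 by simp [smul_single],
    map_smul, Matrix.smul_apply, smul_eq_mul]

/-- The matrix of `v̄ ⊗ 1 : ℂ^m ⊗ ℂ^N → ℂ^n ⊗ ℂ^m`, reading `v` as an `n × N` matrix. -/
def conjKronOne {n N : ℕ} (m : ℕ) (v : Fin n × Fin N → ℂ) :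
    Matrix (Fin n × Fin m) (Fin m × Fin N) ℂ :=
  of fun x y => if x.2 = y.1 then star (v (x.1, y.2)) else 0

def maxEntangled (n : ℕ) : Fin n × Fin n → ℂ :=
  fun x => if x.1 = x.2 then 1 else 0

section

variable {n m N : ℕ} {T : Matrix (Fin n) (Fin n) ℂ →ₗ[ℂ] Matrix (Fin m) (Fin m) ℂ}

theorem liftMap_apply (M : Matrix (Fin n × Fin N) (Fin n × Fin N) ℂ) (k l : Fin m)
    (p q : Fin N) :
    liftMap n m N T M (k, p) (l, q) =
      ∑ a, ∑ b, M (a, p) (b, q) * choiMatrix n m T (a, k) (b, l) :=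
  T.matrix_apply_eq_sum_single _ k l

theorem liftMap_sum {ι : Type*} (s : Finset ι)
    (M : ι → Matrix (Fin n × Fin N) (Fin n × Fin N) ℂ) :
    liftMap n m N T (∑ i ∈ s, M i) = ∑ i ∈ s, liftMap n m N T (M i) := by
  ext ⟨k, p⟩ ⟨l, q⟩
  simp only [liftMap_apply, Matrix.sum_apply, Finset.sum_mul]
  conv_rhs => rw [Finset.sum_comm]
  exact Finset.sum_congr rfl fun _ _ => Finset.sum_comm

theorem liftMap_vecMulVec (v : Fin n × Fin N → ℂ) :
    liftMap n m N T (vecMulVec v (star v)) =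
      (conjKronOne m v)ᴴ * choiMatrix n m T * conjKronOne m v := by
  ext ⟨k, p⟩ ⟨l, q⟩
  rw [liftMap_apply]
  simp only [Matrix.mul_apply, Fintype.sum_prod_type, conjKronOne, conjTranspose_apply, of_apply,
    apply_ite star, star_zero, star_star, ite_mul, zero_mul, mul_ite, mul_zero,
    Finset.sum_ite_eq', Finset.mem_univ, if_true, Finset.sum_mul, vecMulVec_apply, Pi.star_apply]
  rw [Finset.sum_comm]
  exact Finset.sum_congr rfl fun _ _ => Finset.sum_congr rfl fun _ _ => by ring

theorem posSemidef_liftMap {M : Matrix (Fin n × Fin N) (Fin n × Fin N) ℂ}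
    (hC : (choiMatrix n m T).PosSemidef) (hM : M.PosSemidef) :
    (liftMap n m N T M).PosSemidef := by
  obtain ⟨r, v, rfl⟩ := posSemidef_iff_eq_sum_vecMulVec.mp hM
  rw [liftMap_sum]
  refine posSemidef_sum _ fun i _ => ?_
  rw [liftMap_vecMulVec]
  exact hC.conjTranspose_mul_mul_same _

theorem choiMatrix_eq_submatrix_liftMap :
    choiMatrix n m T =
      (liftMap n m n T (vecMulVec (maxEntangled n) (star (maxEntangled n)))).submatrix
        Prod.swap Prod.swap := by
  ext ⟨i, k⟩ ⟨j, l⟩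
  simp only [submatrix_apply, Prod.swap_prod_mk, liftMap_apply, vecMulVec_apply, maxEntangled,
    Pi.star_apply, apply_ite star, star_one, star_zero, ite_mul, one_mul, zero_mul, mul_ite,
    mul_one, mul_zero, Finset.sum_ite_eq', Finset.mem_univ, if_true]

end

/-- Choi's theorem: a linear map between matrix algebras is completely positive iff
its Choi matrix is positive semidefinite. -/
theorem completely_positive_iff_choi_posSemidef (n m : ℕ)
    (T : Matrix (Fin n) (Fin n) ℂ →ₗ[ℂ] Matrix (Fin m) (Fin m) ℂ) :
    IsCompletelyPositive n m T ↔ (choiMatrix n m T).PosSemidef := by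
  refine ⟨fun hT => ?_, fun hC N M hM => posSemidef_liftMap hC hM⟩
  rw [choiMatrix_eq_submatrix_liftMap]
  exact (hT n _ (posSemidef_vecMulVec_self_star _)).submatrix _
end

section
/- A linear map T from n×n matrices to m×m matrices is completely positive if and only if it is of positive type: for every N and all matrices b₁,...,b_N (n×n) and vectors x₁,...,x_N ∈ ℂ^m, one has Σ_{i,j} ⟨x_i, T(b_i* b_j) x_j⟩ ≥ 0. -/
/-!
Writing `M_ij` for the blocks of `M`, the quadratic form of `(T ⊗ id_N) M` at `y = (y_i)` is
`∑ i j, ⟨y_i, T(M_ij) y_j⟩`. Block Gram matrices `(b_i* b_j)_ij` are positive, which gives `⇒`.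
Conversely, a positive `M = B* B` has blocks `M_ij = ∑_l b_li* b_lj`, where `b_li` is the
`(l, i)` block of `B`, so the quadratic form of `(T ⊗ id_N) M` is a sum of positive-type sums;
over `ℂ` a nonnegative quadratic form already makes a matrix Hermitian.
-/

open scoped ComplexOrder

open scoped MatrixOrder
open Matrix

namespace Matrix

variable {k ι : Type*} [Fintype k] [Fintype ι]

theorem dotProduct_mulVec_of_blocks {α : Type*} [NonUnitalNonAssocSemiring α] [Star α]
    (R : ι → ι → Matrix k k α) (y : k × ι → α) :
    star y ⬝ᵥ (of fun p q : k × ι => R p.2 q.2 p.1 q.1) *ᵥ y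
      = ∑ i, ∑ j, star (fun a => y (a, i)) ⬝ᵥ R i j *ᵥ fun a => y (a, j) := by
  simp only [dotProduct, mulVec, Pi.star_apply, of_apply, Fintype.sum_prod_type, Finset.mul_sum]
  rw [Finset.sum_comm]
  exact Finset.sum_congr rfl fun i _ =>
    (Finset.sum_congr rfl fun _ _ => Finset.sum_comm).trans Finset.sum_comm

theorem posSemidef_of_conjTranspose_mul_blocks {𝕜 r : Type*} [RCLike 𝕜] [Fintype r]
    (b : ι → Matrix r k 𝕜) :
    (of fun p q : k × ι => ((b p.2)ᴴ * b q.2) p.1 q.1).PosSemidef := by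
  convert posSemidef_conjTranspose_mul_self (of fun c (p : k × ι) => b p.2 c p.1)
  ext p q
  simp [mul_apply]

theorem PosSemidef.exists_blocks_eq_sum_conjTranspose_mul {𝕜 : Type*} [RCLike 𝕜]
    [DecidableEq k] [DecidableEq ι] {M : Matrix (k × ι) (k × ι) 𝕜} (hM : M.PosSemidef) :
    ∃ b : ι → ι → Matrix k k 𝕜,
      ∀ i j, (of fun a a' => M (a, i) (a', j)) = ∑ l, (b l i)ᴴ * b l j := by
  obtain ⟨B, rfl⟩ := CStarAlgebra.nonneg_iff_eq_star_mul_self.mp hM.nonneg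
  refine ⟨fun l i => of fun c a => B (c, l) (a, i), fun i j => ?_⟩
  ext a a'
  simp only [of_apply, star_eq_conjTranspose, mul_apply, conjTranspose_apply, sum_apply,
    Fintype.sum_prod_type]
  exact Finset.sum_comm

theorem PosSemidef.of_dotProduct_mulVec_nonneg_complex {A : Matrix k k ℂ}
    (h : ∀ x, 0 ≤ star x ⬝ᵥ A *ᵥ x) : A.PosSemidef := by
  classical
  rw [← isPositive_toEuclideanLin_iff, LinearMap.isPositive_iff_complex]
  intro x
  obtain ⟨r, hr, hx⟩ := RCLike.nonneg_iff_exists_ofReal.mp (h x.ofLp)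
  simp only [toLpLin_apply, EuclideanSpace.inner_eq_star_dotProduct, dotProduct_comm x.ofLp,
    star_dotProduct, ← hx]
  simp [hr]

end Matrix

theorem dotProduct_mulVec_liftMap {n m N : ℕ}
    (T : Matrix (Fin n) (Fin n) ℂ →ₗ[ℂ] Matrix (Fin m) (Fin m) ℂ)
    (M : Matrix (Fin n × Fin N) (Fin n × Fin N) ℂ) (y : Fin m × Fin N → ℂ) :
    star y ⬝ᵥ liftMap n m N T M *ᵥ y = ∑ i, ∑ j, star (fun a => y (a, i)) ⬝ᵥ
      T (of fun a a' => M (a, i) (a', j)) *ᵥ fun a => y (a, j) :=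
  dotProduct_mulVec_of_blocks (fun i j => T (of fun a a' => M (a, i) (a', j))) y

/-- A linear map between matrix algebras is completely positive iff it is of
positive type: `∑_{i,j} ⟨x_i, T(b_i* b_j) x_j⟩ ≥ 0` for all finite families of
matrices `b_i` and vectors `x_i`. -/
theorem completely_positive_iff_positive_type (n m : ℕ)
    (T : Matrix (Fin n) (Fin n) ℂ →ₗ[ℂ] Matrix (Fin m) (Fin m) ℂ) :
    IsCompletelyPositive n m T ↔
      ∀ (N : ℕ) (b : Fin N → Matrix (Fin n) (Fin n) ℂ) (x : Fin N → Fin m → ℂ),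
        0 ≤ ∑ i, ∑ j,
          dotProduct (star (x i))
            (Matrix.mulVec (T ((b i).conjTranspose * b j)) (x j)) := by
  constructor
  · intro hcp N b x
    have h := (hcp N _ (posSemidef_of_conjTranspose_mul_blocks b)).dotProduct_mulVec_nonneg
      fun p => x p.2 p.1
    rwa [dotProduct_mulVec_liftMap] at h
  · intro hpt N M hM
    obtain ⟨b, hb⟩ := hM.exists_blocks_eq_sum_conjTranspose_mul
    refine PosSemidef.of_dotProduct_mulVec_nonneg_complex fun y => ?_
    simp only [dotProduct_mulVec_liftMap, hb, map_sum, sum_mulVec, dotProduct_sum]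
    refine (Finset.sum_nonneg (s := .univ) fun l _ => hpt N (b l) fun i a => y (a, i)).trans_eq ?_
    rw [Finset.sum_comm]
    exact Finset.sum_congr rfl fun _ _ => Finset.sum_comm
end

section
/- Consider the two-player EWL quantum game on ℂ²⊗ℂ² with maximally entangled initial state ψ_in = (|00⟩ + i|11⟩)/√2 and final state ξ_fin = J*(U₁⊗U₂)J|00⟩ where J = (I⊗I + i σ_x⊗σ_x)/√2. If both players use full SU(2) strategies, then for every U₂ ∈ SU(2) and every index pair (k,l) ∈ {0,1}², there exists U₁ ∈ SU(2) such that |⟨kl|ξ_fin⟩| = 1, i.e., the first player can force any of the four outcomes with probability 1 (and symmetrically for the second player). -/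
/-!
Write an `SU(2)` matrix as `!![a, b; -conj b, conj a]` with `|a|² + |b|² = 1`. Against
`U₂ = !![c, d; -conj d, conj c]` the amplitudes are real bilinear pairings of the unit vectors
`(a, b), (c, d) ∈ ℂ² ≅ ℝ⁴`, e.g. `⟨00|ξ⟩ = Re (a c) - Im (b d)` and
`⟨01|ξ⟩ = i (Im (conj a * d) + Re (b * conj c))`, so Cauchy–Schwarz is saturated by
`(a, b) = (conj c, -i conj d)` and `(a, b) = (-i d, c)` respectively. The first qubit is flipped
by `iσ_x ∈ SU(2)`, and the game is symmetric in the two players.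
-/

open Kronecker

noncomputable def sigmaX : Matrix (Fin 2) (Fin 2) ℂ := !![0, 1; 1, 0]

/-- The EWL entangling gate `J = (I⊗I + i σ_x⊗σ_x)/√2`. -/
noncomputable def ewlJ : Matrix (Fin 2 × Fin 2) (Fin 2 × Fin 2) ℂ :=
  (1 / (Real.sqrt 2 : ℂ)) •
    ((1 : Matrix (Fin 2 × Fin 2) (Fin 2 × Fin 2) ℂ) + Complex.I • (sigmaX ⊗ₖ sigmaX))

/-- The computational basis vector `|00⟩`. -/
noncomputable def ket00 : Fin 2 × Fin 2 → ℂ := fun p => if p = (0, 0) then 1 else 0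

/-- The EWL final state `ξ_fin = J* (U₁ ⊗ U₂) J |00⟩`. -/
noncomputable def ewlFinal (U₁ U₂ : Matrix (Fin 2) (Fin 2) ℂ) : Fin 2 × Fin 2 → ℂ :=
  Matrix.mulVec (ewlJ.conjTranspose * (U₁ ⊗ₖ U₂) * ewlJ) ket00

namespace Matrix

variable {R : Type*} [CommRing R] [StarRing R]

theorem of_mem_specialUnitaryGroup_fin_two_iff {a b c d : R} :
    !![a, b; c, d] ∈ specialUnitaryGroup (Fin 2) R ↔
      d = star a ∧ c = -star b ∧ a * star a + b * star b = 1 := by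
  constructor
  · intro hU
    obtain ⟨hU, hdet⟩ := mem_specialUnitaryGroup_iff.mp hU
    have hrow := congrFun₂ (mem_unitaryGroup_iff.mp hU)
    have hcol := congrFun₂ (mem_unitaryGroup_iff'.mp hU)
    have h₀ : a * star a + b * star b = 1 := by simpa [mul_apply] using hrow 0 0
    have h₀₀ : star a * a + star c * c = 1 := by simpa [mul_apply] using hcol 0 0
    have h₀₁ : star a * b + star c * d = 0 := by simpa [mul_apply] using hcol 0 1
    have h₁₀ : star b * a + star d * c = 0 := by simpa [mul_apply] using hcol 1 0
    have h₁₁ : star b * b + star d * d = 1 := by simpa [mul_apply] using hcol 1 1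
    rw [det_fin_two_of] at hdet
    refine ⟨?_, ?_, h₀⟩
    · linear_combination (-d) * h₀₀ + c * h₀₁ + star a * hdet
    · linear_combination -(star b * hdet) + d * h₁₀ - c * h₁₁
  · rintro ⟨rfl, rfl, h⟩
    refine mem_specialUnitaryGroup_iff.mpr ⟨mem_unitaryGroup_iff.mpr ?_, ?_⟩
    · ext i j
      fin_cases i <;> fin_cases j <;> simp [mul_apply] <;> grind
    · rw [det_fin_two_of]
      linear_combination h

theorem mem_specialUnitaryGroup_fin_two_iff {U : Matrix (Fin 2) (Fin 2) R} :
    U ∈ specialUnitaryGroup (Fin 2) R ↔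
      U 1 1 = star (U 0 0) ∧ U 1 0 = -star (U 0 1) ∧
        U 0 0 * star (U 0 0) + U 0 1 * star (U 0 1) = 1 := by
  rw [← U.etaExpand_eq]
  exact of_mem_specialUnitaryGroup_fin_two_iff

end Matrix

open Matrix Complex ComplexConjugate

theorem ewlFinal_apply (U₁ U₂ : Matrix (Fin 2) (Fin 2) ℂ) (k l : Fin 2) :
    ewlFinal U₁ U₂ (k, l) =
      (1 / 2) * (U₁ k 0 * U₂ l 0 + I * (U₁ k 1 * U₂ l 1)
        - I * (U₁ (1 - k) 0 * U₂ (1 - l) 0) + U₁ (1 - k) 1 * U₂ (1 - l) 1) := by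
  have h2 : ((Real.sqrt 2 : ℂ))⁻¹ ^ 2 = 1 / 2 := by
    rw [sq, ← mul_inv, ← ofReal_mul, Real.mul_self_sqrt (by norm_num)]; norm_num
  fin_cases k <;> fin_cases l <;>
    simp [ewlFinal, ewlJ, sigmaX, ket00, mulVec, mul_apply, Fintype.sum_prod_type, one_apply,
      dotProduct, conjTranspose_apply, Prod.ext_iff] <;>
    ring_nf <;>
    simp [h2, I_sq] <;> ring

theorem ewlFinal_swap (U₁ U₂ : Matrix (Fin 2) (Fin 2) ℂ) (k l : Fin 2) :
    ewlFinal U₂ U₁ (l, k) = ewlFinal U₁ U₂ (k, l) := by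
  simp only [ewlFinal_apply]
  ring

/-- `iσ_x ⊗ 1` commutes with `J`, so it only flips the first qubit of the final state. -/
theorem ewlFinal_I_smul_sigmaX_mul (U₁ U₂ : Matrix (Fin 2) (Fin 2) ℂ) (k l : Fin 2) :
    ewlFinal ((I • sigmaX) * U₁) U₂ (k, l) = I * ewlFinal U₁ U₂ (1 - k, l) := by
  have hrow : ∀ i j, (I • sigmaX * U₁) i j = I * U₁ (1 - i) j := by
    intro i j
    fin_cases i <;> simp [sigmaX, mul_apply]
  simp only [ewlFinal_apply, hrow, sub_sub_cancel]
  ring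

theorem I_smul_sigmaX_mem_specialUnitaryGroup :
    I • sigmaX ∈ specialUnitaryGroup (Fin 2) ℂ := by
  simp [mem_specialUnitaryGroup_fin_two_iff, sigmaX]

variable {U₂ : Matrix (Fin 2) (Fin 2) ℂ}

theorem exists_mem_specialUnitaryGroup_ewlFinal_zero_zero_eq_one
    (hU₂ : U₂ ∈ specialUnitaryGroup (Fin 2) ℂ) :
    ∃ U₁ ∈ specialUnitaryGroup (Fin 2) ℂ, ewlFinal U₁ U₂ (0, 0) = 1 := by
  obtain ⟨h₁₁, h₁₀, hnorm⟩ := mem_specialUnitaryGroup_fin_two_iff.mp hU₂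
  set c := U₂ 0 0
  set d := U₂ 0 1
  rw [star_def] at h₁₁ h₁₀ hnorm
  refine ⟨!![conj c, -I * conj d; -I * d, c], ?_, ?_⟩
  · rw [of_mem_specialUnitaryGroup_fin_two_iff]
    simp only [star_def, map_mul, map_neg, conj_I, conj_conj, neg_mul, neg_neg, true_and]
    linear_combination hnorm - d * conj d * I_sq
  · simp only [ewlFinal_apply, of_apply, cons_val', cons_val_zero, cons_val_one, cons_val_fin_one,
      sub_zero, h₁₀, h₁₁]
    linear_combination hnorm - d * conj d * I_sq

theorem exists_mem_specialUnitaryGroup_ewlFinal_zero_one_eq_I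
    (hU₂ : U₂ ∈ specialUnitaryGroup (Fin 2) ℂ) :
    ∃ U₁ ∈ specialUnitaryGroup (Fin 2) ℂ, ewlFinal U₁ U₂ (0, 1) = I := by
  obtain ⟨h₁₁, h₁₀, hnorm⟩ := mem_specialUnitaryGroup_fin_two_iff.mp hU₂
  set c := U₂ 0 0
  set d := U₂ 0 1
  rw [star_def] at h₁₁ h₁₀ hnorm
  refine ⟨!![-I * d, c; -conj c, I * conj d], ?_, ?_⟩
  · rw [of_mem_specialUnitaryGroup_fin_two_iff]
    simp only [star_def, map_mul, map_neg, conj_I, neg_mul, neg_neg, true_and]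
    linear_combination hnorm - d * conj d * I_sq
  · simp only [ewlFinal_apply, of_apply, cons_val', cons_val_zero, cons_val_one, cons_val_fin_one,
      sub_zero, sub_self, h₁₀, h₁₁]
    linear_combination I * hnorm

theorem exists_mem_specialUnitaryGroup_norm_ewlFinal_eq_one
    (hU₂ : U₂ ∈ specialUnitaryGroup (Fin 2) ℂ) (k l : Fin 2) :
    ∃ U₁ ∈ specialUnitaryGroup (Fin 2) ℂ, ‖ewlFinal U₁ U₂ (k, l)‖ = 1 := by
  obtain ⟨U, hU, hnorm⟩ : ∃ U ∈ specialUnitaryGroup (Fin 2) ℂ, ‖ewlFinal U U₂ (0, l)‖ = 1 := by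
    fin_cases l
    · obtain ⟨U, hU, h⟩ := exists_mem_specialUnitaryGroup_ewlFinal_zero_zero_eq_one hU₂
      exact ⟨U, hU, by simp [h]⟩
    · obtain ⟨U, hU, h⟩ := exists_mem_specialUnitaryGroup_ewlFinal_zero_one_eq_I hU₂
      exact ⟨U, hU, by simp [h]⟩
  fin_cases k
  · exact ⟨U, hU, hnorm⟩
  · refine ⟨I • sigmaX * U, mul_mem I_smul_sigmaX_mem_specialUnitaryGroup hU, ?_⟩
    rw [ewlFinal_I_smul_sigmaX_mul, norm_mul, norm_I, one_mul]
    exact hnorm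

/-- In the maximally entangled EWL game with full `SU(2)` strategies, against any
strategy of the opponent, each player can force any of the four outcomes to occur
with probability `1`. -/
theorem ewl_each_player_can_force_any_outcome :
    (∀ U₂ ∈ Matrix.specialUnitaryGroup (Fin 2) ℂ, ∀ k l : Fin 2,
        ∃ U₁ ∈ Matrix.specialUnitaryGroup (Fin 2) ℂ,
          ‖ewlFinal U₁ U₂ (k, l)‖ = 1) ∧
    (∀ U₁ ∈ Matrix.specialUnitaryGroup (Fin 2) ℂ, ∀ k l : Fin 2,
        ∃ U₂ ∈ Matrix.specialUnitaryGroup (Fin 2) ℂ,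
          ‖ewlFinal U₁ U₂ (k, l)‖ = 1) :=
  ⟨fun _ hU₂ k l => exists_mem_specialUnitaryGroup_norm_ewlFinal_eq_one hU₂ k l,
    fun _ hU₁ k l => by
      simpa only [ewlFinal_swap] using exists_mem_specialUnitaryGroup_norm_ewlFinal_eq_one hU₁ l k⟩
end
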